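/- Let X and Y be topological spaces, D_X ⊆ X and D_Y ⊆ Y closed discrete subsets, and φ : Y → X an injection such that φ[Y \ D_Y] = D_X and φ[Y] is dense in X. Suppose X is metrizable, Y is metrizable, and that X and Y are perfectly normal and collectionwise normal. Then the space ⟨X, σ(τ_X, τ_Y, φ)⟩ is perfectly normal, i.e., it is normal and every closed subset of ⟨X, σ(τ_X, τ_Y, φ)⟩ is a countable intersection of open sets. -/

import Mathlib

open Set Topology

universe u v

/-- The topology σ(τ_X, τ_Y, φ): open sets of X whose φ-preimage is open in Y. -/
def sigmaTop {X : Type*} {Y : Type*} (tX : TopologicalSpace X) (tY : TopologicalSpace Y)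
    (φ : Y → X) : TopologicalSpace X where
  IsOpen U := tX.IsOpen U ∧ tY.IsOpen (φ ⁻¹' U)
  isOpen_univ := ⟨tX.isOpen_univ, by simpa using tY.isOpen_univ⟩
  isOpen_inter U V hU hV :=
    ⟨tX.isOpen_inter U V hU.1 hV.1, by
      rw [Set.preimage_inter]
      exact tY.isOpen_inter _ _ hU.2 hV.2⟩
  isOpen_sUnion s hs :=
    ⟨tX.isOpen_sUnion s fun U hU => (hs U hU).1, by
      rw [Set.preimage_sUnion]
      exact @isOpen_biUnion _ _ tY _ _ fun U hU => (hs U hU).2⟩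

/-- A set is closed discrete: closed, and its subspace topology is discrete. -/
def ClosedDiscrete {X : Type*} (t : TopologicalSpace X) (D : Set X) : Prop :=
  @IsClosed X t D ∧ @DiscreteTopology D (TopologicalSpace.induced (Subtype.val : D → X) t)

/-- A family of sets is discrete: every point has a neighborhood meeting
at most one member of the family. -/
def DiscreteFamily {X : Type*} {A : Type*} (t : TopologicalSpace X) (F : A → Set X) : Prop :=
  ∀ x : X, ∃ U, t.IsOpen U ∧ x ∈ U ∧ {α | (F α ∩ U).Nonempty}.Subsingleton

/-- A space is collectionwise normal: normal, and every discrete family of pairwise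
disjoint closed sets can be separated by a pairwise disjoint family of open sets. -/
def CollectionwiseNormal {X : Type u} (t : TopologicalSpace X) : Prop :=
  @NormalSpace X t ∧
    ∀ {A : Type u} (F : A → Set X), DiscreteFamily t F → (∀ α, @IsClosed X t (F α)) →
      Pairwise (Function.onFun Disjoint F) →
      ∃ U : A → Set X, (∀ α, t.IsOpen (U α)) ∧ Pairwise (Function.onFun Disjoint U) ∧
        ∀ α, F α ⊆ U α

/-
Given a σ-closed `F`, grow an open `U ⊇ F` in `X` and an open `O ⊇ φ⁻¹ F` in `Y` together, as the least
fixed point of two rules: a ball around `φ y` goes into `U` for every `y ∈ O \ D_Y`, and a ball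
around `p` goes into `O` for every `p ∈ D_Y` with `φ p ∈ U`. Removing from `U` the points `φ y`
with `y ∉ O ∪ D_Y`, a subset of the closed discrete set `D_X`, leaves a σ-open set containing `F`
whose preimage is `O` minus a subset of `D_Y`. With all radii `1 / n` these sets intersect to `F`.
For disjoint σ-closed `F₀`, `F₁`, take each radius half the distance from the centre to
the other set and to the rest of `D_X` (resp. `D_Y`): balls around distinct centres are then
disjoint, so the complement of the construction for `F₁` is closed under the rules for `F₀` and
the two constructions are disjoint.
-/

open Metric
open scoped ENNReal

theorem ClosedDiscrete.isClosed_of_subset {X : Type*} [TopologicalSpace X] {D S : Set X}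
    (hD : ClosedDiscrete inferInstance D) (hSD : S ⊆ D) : IsClosed S := by
  have := hD.2
  have h := (isClosed_discrete (Subtype.val ⁻¹' S : Set D)).trans hD.1
  rwa [Subtype.image_preimage_coe, inter_eq_right.mpr hSD] at h

theorem isClosed_sigmaTop_iff {X Y : Type*} (tX : TopologicalSpace X) (tY : TopologicalSpace Y)
    (φ : Y → X) {F : Set X} :
    IsClosed[sigmaTop tX tY φ] F ↔ IsClosed[tX] F ∧ IsClosed[tY] (φ ⁻¹' F) := by
  rw [← @isOpen_compl_iff _ _ (sigmaTop tX tY φ), ← @isOpen_compl_iff _ _ tX,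
    ← @isOpen_compl_iff _ _ tY, ← preimage_compl]
  rfl

section EBall

variable {α : Type*} [PseudoEMetricSpace α]

theorem subset_biUnion_eball {C : Set α} {r : α → ℝ≥0∞} (hr : ∀ c ∈ C, 0 < r c) :
    C ⊆ ⋃ c ∈ C, eball c (r c) :=
  fun c hc => mem_biUnion hc (mem_eball_self (hr c hc))

theorem disjoint_biUnion_eball_of_le_infEDist {C G : Set α} {r : α → ℝ≥0∞}
    (hr : ∀ c ∈ C, r c ≤ infEDist c G) : Disjoint (⋃ c ∈ C, eball c (r c)) G := by
  refine disjoint_iUnion₂_left.mpr fun c hc => disjoint_left.mpr fun z hz hzG => ?_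
  exact ((infEDist_le_edist_of_mem hzG).trans_lt (mem_eball'.mp hz)).not_ge (hr c hc)

theorem mem_closure_of_forall_mem_biUnion_eball {C : Set α} {x : α}
    (h : ∀ n : ℕ, x ∈ ⋃ c ∈ C, eball c (n : ℝ≥0∞)⁻¹) : x ∈ closure C := by
  refine EMetric.mem_closure_iff.mpr fun ε hε => ?_
  obtain ⟨n, hn⟩ := ENNReal.exists_inv_nat_lt hε.ne'
  obtain ⟨c, hc, hxc⟩ := mem_iUnion₂.mp (h n)
  exact ⟨c, hc, (mem_eball.mp hxc).trans hn⟩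

end EBall

section SepRadius

variable {α : Type*} [PseudoEMetricSpace α] {D G G' : Set α}

noncomputable def sepRadius (D G : Set α) (c : α) : ℝ≥0∞ := infEDist c (D \ {c} ∪ G) / 2

theorem sepRadius_le_infEDist (c : α) : sepRadius D G c ≤ infEDist c G :=
  ENNReal.half_le_self.trans (infEDist_anti subset_union_right)

theorem sepRadius_pos (hD : ClosedDiscrete inferInstance D) (hG : IsClosed G) {c : α}
    (hc : c ∉ G) : 0 < sepRadius D G c := by
  have hclosed : IsClosed (D \ {c} ∪ G) := (hD.isClosed_of_subset sdiff_subset).union hG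
  refine ENNReal.half_pos (infEDist_pos_iff_notMem_closure.mpr ?_).ne'
  rw [hclosed.closure_eq]
  rintro (⟨-, hcc⟩ | hcG)
  exacts [hcc rfl, hc hcG]

theorem disjoint_biUnion_eball_sepRadius {C C' : Set α} (hC : C ⊆ G' ∪ D) (hC' : C' ⊆ G ∪ D)
    (hCC' : Disjoint C C') :
    Disjoint (⋃ c ∈ C, eball c (sepRadius D G c)) (⋃ t ∈ C', eball t (sepRadius D G' t)) := by
  refine disjoint_iUnion₂_left.mpr fun c hc => disjoint_iUnion₂_right.mpr fun t ht => ?_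
  have hct : c ≠ t := fun h => disjoint_left.mp hCC' hc (h ▸ ht)
  have hmem {a b : α} {H : Set α} (hab : a ≠ b) (hb : b ∈ H ∪ D) : b ∈ D \ {a} ∪ H :=
    hb.elim Or.inr fun hbD => Or.inl ⟨hbD, hab.symm⟩
  refine eball_disjoint ?_
  unfold sepRadius
  calc _ ≤ edist c t / 2 + edist c t / 2 := by
        gcongr
        · exact infEDist_le_edist_of_mem (hmem hct (hC' ht))
        · rw [edist_comm]
          exact infEDist_le_edist_of_mem (hmem hct.symm (hC hc))
    _ = edist c t := ENNReal.add_halves _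

end SepRadius

section Cascade

variable {X Y : Type*} (φ : Y → X) (D : Set Y) (F : Set X)

def cascadeCentres (p : Set X × Set Y) : Set X × Set Y :=
  (F ∪ φ '' (p.2 \ D), φ ⁻¹' F ∪ (D ∩ φ ⁻¹' p.1))

theorem cascadeCentres_mono : Monotone (cascadeCentres φ D F) := fun _ _ h =>
  ⟨union_subset_union_right _ (image_mono (sdiff_subset_sdiff_left h.2)),
    union_subset_union_right _ (inter_subset_inter_right _ (preimage_mono h.1))⟩

theorem cascadeCentres_fst_subset (p : Set X × Set Y) :
    (cascadeCentres φ D F p).1 ⊆ F ∪ φ '' Dᶜ :=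
  union_subset_union_right _ <| image_mono fun _ hy => hy.2

theorem cascadeCentres_snd_subset (p : Set X × Set Y) :
    (cascadeCentres φ D F p).2 ⊆ φ ⁻¹' F ∪ D :=
  union_subset_union_right _ inter_subset_left

variable {φ D} in
theorem disjoint_cascadeCentres_compl (hinj : Function.Injective φ) {F₀ F₁ : Set X}
    (h01 : Disjoint F₀ F₁) {p : Set X × Set Y} (hp : cascadeCentres φ D F₁ p ≤ p)
    (hpX : Disjoint p.1 F₀) (hpY : Disjoint p.2 (φ ⁻¹' F₀)) :
    Disjoint (cascadeCentres φ D F₀ pᶜ).1 (cascadeCentres φ D F₁ p).1 ∧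
      Disjoint (cascadeCentres φ D F₀ pᶜ).2 (cascadeCentres φ D F₁ p).2 := by
  constructor <;> refine disjoint_left.mpr ?_
  · rintro x (hx₀ | ⟨y, ⟨hy, -⟩, rfl⟩) (hx₁ | ⟨y', ⟨hy', -⟩, hyy'⟩)
    · exact disjoint_left.mp h01 hx₀ hx₁
    · exact disjoint_left.mp hpY hy' (show φ y' ∈ F₀ from hyy' ▸ hx₀)
    · exact hy (hp.2 (Or.inl hx₁))
    · exact hy (hinj hyy' ▸ hy')
  · rintro y (hy₀ | ⟨-, hy⟩) (hy₁ | ⟨-, hy'⟩)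
    · exact disjoint_left.mp h01 hy₀ hy₁
    · exact disjoint_left.mp hpX hy' hy₀
    · exact hy (hp.1 (Or.inl hy₁))
    · exact hy hy'

def cascadeNbhd (p : Set X × Set Y) : Set X := p.1 \ φ '' (p.2 ∪ D)ᶜ

variable [PseudoEMetricSpace X] [PseudoEMetricSpace Y] (rX : X → ℝ≥0∞) (rY : Y → ℝ≥0∞)

def cascadeStep : Set X × Set Y →o Set X × Set Y where
  toFun p := (⋃ c ∈ (cascadeCentres φ D F p).1, eball c (rX c),
    ⋃ c ∈ (cascadeCentres φ D F p).2, eball c (rY c))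
  monotone' _ _ h := ⟨biUnion_subset_biUnion_left (cascadeCentres_mono φ D F h).1,
    biUnion_subset_biUnion_left (cascadeCentres_mono φ D F h).2⟩

def cascade : Set X × Set Y := OrderHom.lfp (cascadeStep φ D F rX rY)

theorem cascade_fst : (cascade φ D F rX rY).1 =
    ⋃ c ∈ (cascadeCentres φ D F (cascade φ D F rX rY)).1, eball c (rX c) :=
  congrArg Prod.fst (OrderHom.map_lfp _).symm

theorem cascade_snd : (cascade φ D F rX rY).2 =
    ⋃ c ∈ (cascadeCentres φ D F (cascade φ D F rX rY)).2, eball c (rY c) :=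
  congrArg Prod.snd (OrderHom.map_lfp _).symm

theorem isOpen_cascade_fst : IsOpen (cascade φ D F rX rY).1 := by
  rw [cascade_fst]
  exact isOpen_biUnion fun _ _ => isOpen_eball

theorem isOpen_cascade_snd : IsOpen (cascade φ D F rX rY).2 := by
  rw [cascade_snd]
  exact isOpen_biUnion fun _ _ => isOpen_eball

theorem cascadeCentres_le_cascade
    (hX : ∀ c ∈ (cascadeCentres φ D F (cascade φ D F rX rY)).1, 0 < rX c)
    (hY : ∀ c ∈ (cascadeCentres φ D F (cascade φ D F rX rY)).2, 0 < rY c) :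
    cascadeCentres φ D F (cascade φ D F rX rY) ≤ cascade φ D F rX rY :=
  ⟨(subset_biUnion_eball hX).trans (cascade_fst φ D F rX rY).ge,
    (subset_biUnion_eball hY).trans (cascade_snd φ D F rX rY).ge⟩

theorem cascade_fst_subset : (cascade φ D F rX rY).1 ⊆ ⋃ c ∈ F ∪ φ '' Dᶜ, eball c (rX c) :=
  (cascade_fst φ D F rX rY).le.trans <|
    biUnion_subset_biUnion_left (cascadeCentres_fst_subset φ D F _)

theorem cascade_snd_subset : (cascade φ D F rX rY).2 ⊆ ⋃ c ∈ φ ⁻¹' F ∪ D, eball c (rY c) :=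
  (cascade_snd φ D F rX rY).le.trans <|
    biUnion_subset_biUnion_left (cascadeCentres_snd_subset φ D F _)

variable {φ D F rX rY}

theorem preimage_cascadeNbhd (hinj : Function.Injective φ)
    (hc : cascadeCentres φ D F (cascade φ D F rX rY) ≤ cascade φ D F rX rY) :
    φ ⁻¹' cascadeNbhd φ D (cascade φ D F rX rY) =
      (cascade φ D F rX rY).2 \ (D \ φ ⁻¹' (cascade φ D F rX rY).1) := by
  have hXY : ∀ y ∈ (cascade φ D F rX rY).2, y ∉ D → φ y ∈ (cascade φ D F rX rY).1 :=
    fun y hy hyD => hc.1 (Or.inr ⟨y, ⟨hy, hyD⟩, rfl⟩)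
  have hYX : ∀ p ∈ D, φ p ∈ (cascade φ D F rX rY).1 → p ∈ (cascade φ D F rX rY).2 :=
    fun p hp hpU => hc.2 (Or.inr ⟨hp, hpU⟩)
  rw [cascadeNbhd, preimage_sdiff, hinj.preimage_image]
  ext y
  simp only [mem_sdiff, mem_preimage, mem_compl_iff, mem_union]
  grind

theorem isOpen_cascadeNbhd (hD : ClosedDiscrete inferInstance D)
    (hDX : ClosedDiscrete inferInstance (φ '' Dᶜ)) (hinj : Function.Injective φ)
    (hc : cascadeCentres φ D F (cascade φ D F rX rY) ≤ cascade φ D F rX rY) :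
    IsOpen (cascadeNbhd φ D (cascade φ D F rX rY)) ∧
      IsOpen (φ ⁻¹' cascadeNbhd φ D (cascade φ D F rX rY)) := by
  refine ⟨(isOpen_cascade_fst φ D F rX rY).sdiff
    (hDX.isClosed_of_subset (image_mono (compl_subset_compl.mpr subset_union_right))), ?_⟩
  rw [preimage_cascadeNbhd hinj hc]
  exact (isOpen_cascade_snd φ D F rX rY).sdiff (hD.isClosed_of_subset sdiff_subset)

theorem subset_cascadeNbhd
    (hc : cascadeCentres φ D F (cascade φ D F rX rY) ≤ cascade φ D F rX rY) :
    F ⊆ cascadeNbhd φ D (cascade φ D F rX rY) := by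
  refine fun x hx => ⟨hc.1 (Or.inl hx), ?_⟩
  rintro ⟨y, hy, rfl⟩
  exact hy (Or.inl (hc.2 (Or.inl hx)))

end Cascade

section GDelta

variable {X Y : Type*} [PseudoEMetricSpace X] [PseudoEMetricSpace Y] {φ : Y → X} {D : Set Y}
  {F : Set X}

theorem iInter_cascadeNbhd_subset (hF : IsClosed F) (hFφ : IsClosed (φ ⁻¹' F))
    (hD : IsClosed D) (hDX : IsClosed (φ '' Dᶜ)) :
    ⋂ n : ℕ, cascadeNbhd φ D (cascade φ D F (fun _ => (n : ℝ≥0∞)⁻¹) fun _ => (n : ℝ≥0∞)⁻¹)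
      ⊆ F := by
  intro x hx
  rw [mem_iInter] at hx
  by_cases hxD : x ∈ φ '' Dᶜ
  · obtain ⟨y, hyD, rfl⟩ := hxD
    have hy : y ∈ closure (φ ⁻¹' F ∪ D) := mem_closure_of_forall_mem_biUnion_eball fun n =>
      cascade_snd_subset φ D F (fun _ => (n : ℝ≥0∞)⁻¹) _ <|
        by_contra fun hyO => (hx n).2 ⟨y, by simp [hyO, hyD], rfl⟩
    rw [(hFφ.union hD).closure_eq] at hy
    exact hy.resolve_right hyD
  · have hx' : x ∈ closure (F ∪ φ '' Dᶜ) := mem_closure_of_forall_mem_biUnion_eball fun n =>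
      cascade_fst_subset φ D F _ (fun _ => (n : ℝ≥0∞)⁻¹) (hx n).1
    rw [(hF.union hDX).closure_eq] at hx'
    exact hx'.resolve_right hxD

theorem exists_isOpen_sigmaTop_iInter_eq (hD : ClosedDiscrete inferInstance D)
    (hDX : ClosedDiscrete inferInstance (φ '' Dᶜ)) (hinj : Function.Injective φ)
    (hF : IsClosed[sigmaTop inferInstance inferInstance φ] F) :
    ∃ G : ℕ → Set X,
      (∀ n, IsOpen[sigmaTop inferInstance inferInstance φ] (G n)) ∧ F = ⋂ n, G n := by
  obtain ⟨hF, hFφ⟩ := (isClosed_sigmaTop_iff _ _ φ).mp hF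
  have hc (n : ℕ) := cascadeCentres_le_cascade φ D F (fun _ => (n : ℝ≥0∞)⁻¹)
    (fun _ => (n : ℝ≥0∞)⁻¹) (fun _ _ => ENNReal.inv_pos.mpr (ENNReal.natCast_ne_top n))
    (fun _ _ => ENNReal.inv_pos.mpr (ENNReal.natCast_ne_top n))
  exact ⟨_, fun n => isOpen_cascadeNbhd hD hDX hinj (hc n),
    (subset_iInter fun n => subset_cascadeNbhd (hc n)).antisymm
      (iInter_cascadeNbhd_subset hF hFφ hD.1 hDX.1)⟩

end GDelta

section Normal

variable {X Y : Type*} [PseudoEMetricSpace X] [PseudoEMetricSpace Y] {φ : Y → X} {D : Set Y}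
  {F G : Set X}

variable (φ D) in
noncomputable abbrev sepCascade (F G : Set X) : Set X × Set Y :=
  cascade φ D F (sepRadius (φ '' Dᶜ) G) (sepRadius D (φ ⁻¹' G))

theorem disjoint_sepCascade_fst : Disjoint (sepCascade φ D F G).1 G := by
  rw [cascade_fst]
  exact disjoint_biUnion_eball_of_le_infEDist fun c _ => sepRadius_le_infEDist c

theorem disjoint_sepCascade_snd : Disjoint (sepCascade φ D F G).2 (φ ⁻¹' G) := by
  rw [cascade_snd]
  exact disjoint_biUnion_eball_of_le_infEDist fun c _ => sepRadius_le_infEDist c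

theorem cascadeCentres_sepCascade_le (hD : ClosedDiscrete inferInstance D)
    (hDX : ClosedDiscrete inferInstance (φ '' Dᶜ)) (hG : IsClosed G) (hGφ : IsClosed (φ ⁻¹' G))
    (hFG : Disjoint F G) : cascadeCentres φ D F (sepCascade φ D F G) ≤ sepCascade φ D F G := by
  refine cascadeCentres_le_cascade _ _ _ _ _ (fun c hc => sepRadius_pos hDX hG ?_)
    (fun c hc => sepRadius_pos hD hGφ ?_)
  · rcases hc with hcF | ⟨y, ⟨hy, -⟩, rfl⟩
    exacts [disjoint_left.mp hFG hcF, fun hyG => disjoint_left.mp disjoint_sepCascade_snd hy hyG]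
  · rcases hc with hcF | ⟨-, hc⟩
    exacts [disjoint_left.mp hFG hcF, fun hcG => disjoint_left.mp disjoint_sepCascade_fst hc hcG]

theorem disjoint_sepCascade (hD : ClosedDiscrete inferInstance D)
    (hDX : ClosedDiscrete inferInstance (φ '' Dᶜ)) (hinj : Function.Injective φ) {F₀ F₁ : Set X}
    (h₀ : IsClosed F₀) (h₀φ : IsClosed (φ ⁻¹' F₀)) (h01 : Disjoint F₀ F₁) :
    Disjoint (sepCascade φ D F₀ F₁).1 (sepCascade φ D F₁ F₀).1 := by
  set C := sepCascade φ D F₁ F₀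
  obtain ⟨hX, hY⟩ := disjoint_cascadeCentres_compl hinj h01
    (cascadeCentres_sepCascade_le hD hDX h₀ h₀φ h01.symm) disjoint_sepCascade_fst
    disjoint_sepCascade_snd
  have hle : sepCascade φ D F₀ F₁ ≤ Cᶜ := by
    refine OrderHom.lfp_le _ ⟨subset_compl_iff_disjoint_right.mpr ?_,
      subset_compl_iff_disjoint_right.mpr ?_⟩
    · rw [cascade_fst]
      exact disjoint_biUnion_eball_sepRadius (cascadeCentres_fst_subset φ D F₀ _)
        (cascadeCentres_fst_subset φ D F₁ _) hX
    · rw [cascade_snd]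
      exact disjoint_biUnion_eball_sepRadius (cascadeCentres_snd_subset φ D F₀ _)
        (cascadeCentres_snd_subset φ D F₁ _) hY
  exact subset_compl_iff_disjoint_right.mp hle.1

theorem normalSpace_sigmaTop (hD : ClosedDiscrete inferInstance D)
    (hDX : ClosedDiscrete inferInstance (φ '' Dᶜ)) (hinj : Function.Injective φ) :
    @NormalSpace X (sigmaTop inferInstance inferInstance φ) := by
  refine @NormalSpace.mk _ (sigmaTop _ _ φ) fun F₀ F₁ h₀ h₁ h01 => ?_
  obtain ⟨h₀, h₀φ⟩ := (isClosed_sigmaTop_iff _ _ φ).mp h₀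
  obtain ⟨h₁, h₁φ⟩ := (isClosed_sigmaTop_iff _ _ φ).mp h₁
  have hc₀ := cascadeCentres_sepCascade_le hD hDX h₁ h₁φ h01
  have hc₁ := cascadeCentres_sepCascade_le hD hDX h₀ h₀φ h01.symm
  exact ⟨_, _, isOpen_cascadeNbhd hD hDX hinj hc₀, isOpen_cascadeNbhd hD hDX hinj hc₁,
    subset_cascadeNbhd hc₀, subset_cascadeNbhd hc₁,
    (disjoint_sepCascade hD hDX hinj h₀ h₀φ h01).mono sdiff_subset sdiff_subset⟩

end Normal

theorem statement17_general {X : Type u} {Y : Type v} (tX : TopologicalSpace X) (tY : TopologicalSpace Y)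
    (hmX : @TopologicalSpace.MetrizableSpace X tX)
    (hmY : @TopologicalSpace.MetrizableSpace Y tY)
    (DX : Set X) (DY : Set Y) (φ : Y → X)
    (hDX : ClosedDiscrete tX DX) (hDY : ClosedDiscrete tY DY)
    (hinj : Function.Injective φ)
    (himg : φ '' DYᶜ = DX) :
    @NormalSpace X (sigmaTop tX tY φ) ∧
      ∀ F : Set X, @IsClosed X (sigmaTop tX tY φ) F →
        ∃ G : ℕ → Set X, (∀ n, (sigmaTop tX tY φ).IsOpen (G n)) ∧ F = ⋂ n, G n := by
  obtain ⟨mX, rfl⟩ : ∃ m : MetricSpace X, m.toUniformSpace.toTopologicalSpace = tX :=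
    ⟨@TopologicalSpace.metrizableSpaceMetric X tX hmX, rfl⟩
  obtain ⟨mY, rfl⟩ : ∃ m : MetricSpace Y, m.toUniformSpace.toTopologicalSpace = tY :=
    ⟨@TopologicalSpace.metrizableSpaceMetric Y tY hmY, rfl⟩
  subst himg
  exact ⟨normalSpace_sigmaTop hDY hDX hinj,
    fun F hF => exists_isOpen_sigmaTop_iInter_eq hDY hDX hinj hF⟩

theorem statement17 {X : Type u} {Y : Type v} (tX : TopologicalSpace X) (tY : TopologicalSpace Y)
    (hmX : @TopologicalSpace.MetrizableSpace X tX)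
    (hmY : @TopologicalSpace.MetrizableSpace Y tY)
    (hpX : @PerfectlyNormalSpace X tX) (hpY : @PerfectlyNormalSpace Y tY)
    (hcX : CollectionwiseNormal tX) (hcY : CollectionwiseNormal tY)
    (DX : Set X) (DY : Set Y) (φ : Y → X)
    (hDX : ClosedDiscrete tX DX) (hDY : ClosedDiscrete tY DY)
    (hinj : Function.Injective φ)
    (himg : φ '' DYᶜ = DX)
    (hdense : @Dense X tX (Set.range φ)) :
    @NormalSpace X (sigmaTop tX tY φ) ∧
      ∀ F : Set X, @IsClosed X (sigmaTop tX tY φ) F →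
        ∃ G : ℕ → Set X, (∀ n, (sigmaTop tX tY φ).IsOpen (G n)) ∧ F = ⋂ n, G n :=
  statement17_general tX tY hmX hmY DX DY φ hDX hDY hinj himg
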